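/- Let (C, F) be a colored cone for data (Q, V, D, ρ), and let C₀ be a face of the cone C whose relative interior meets V. Set F₀ := F ∩ ρ⁻¹(C₀). Then (C₀, F₀) is again a colored cone, and if (C, F) is strictly convex then so is (C₀, F₀). -/
import Mathlib


open scoped BigOperators

variable {Q : Type*} [AddCommGroup Q] [Module ℚ Q]

/-- The cone generated by a subset `S` of a ℚ-vector space: all finite nonnegative
rational combinations of elements of `S`. -/
def ConeGen (S : Set Q) : Set Q :=
  {x | ∃ (n : ℕ) (c : Fin n → ℚ) (v : Fin n → Q),
        (∀ i, 0 ≤ c i) ∧ (∀ i, v i ∈ S) ∧ x = ∑ i, c i • v i}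

/-- A (convex) cone: contains `0`, closed under addition and nonnegative rational scaling. -/
def IsCone (C : Set Q) : Prop :=
  0 ∈ C ∧ (∀ x ∈ C, ∀ y ∈ C, x + y ∈ C) ∧ ∀ q : ℚ, 0 ≤ q → ∀ x ∈ C, q • x ∈ C

/-- `C₀` is a face of the cone `C`. -/
def IsFaceOf (C₀ C : Set Q) : Prop :=
  IsCone C₀ ∧ C₀ ⊆ C ∧ ∀ x ∈ C, ∀ y ∈ C, x + y ∈ C₀ → x ∈ C₀ ∧ y ∈ C₀

/-- The relative interior of a cone: `C` minus all its proper faces. -/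
def RelInt (C : Set Q) : Set Q :=
  C \ ⋃ (C₀ : Set Q) (_ : IsFaceOf C₀ C ∧ C₀ ≠ C), C₀

/-- A colored cone for the data `(Q, V, D, ρ)`:
(CC1) `C` is generated as a cone by `ρ(F)` and finitely many elements of `V`;
(CC2) the relative interior of `C` meets `V`. -/
def IsColoredCone (V : Set Q) {D : Type*} (ρ : D → Q) (C : Set Q) (F : Set D) : Prop :=
  (∃ V₀ : Set Q, V₀.Finite ∧ V₀ ⊆ V ∧ C = ConeGen (ρ '' F ∪ V₀)) ∧
  (RelInt C ∩ V).Nonempty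

/-- Strict convexity of a colored cone: `C ∩ (−C) = {0}` and `0 ∉ ρ(F)`. -/
def IsStrictlyConvexColoredCone (V : Set Q) {D : Type*} (ρ : D → Q)
    (C : Set Q) (F : Set D) : Prop :=
  IsColoredCone V ρ C F ∧ C ∩ {x | -x ∈ C} = {0} ∧ (0 : Q) ∉ ρ '' F

lemma isCone_coneGen (S : Set Q) : IsCone (ConeGen S) := by
  refine ⟨⟨0, Fin.elim0, Fin.elim0, fun i => i.elim0, fun i => i.elim0, by simp⟩, ?_, ?_⟩
  · rintro x ⟨n, c, v, hc, hv, rfl⟩ y ⟨m, c', v', hc', hv', rfl⟩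
    refine ⟨n + m, Fin.append c c', Fin.append v v', ?_, ?_, ?_⟩
    · intro i
      refine Fin.addCases (fun j => ?_) (fun j => ?_) i
      · simpa [Fin.append_left] using hc j
      · simpa [Fin.append_right] using hc' j
    · intro i
      refine Fin.addCases (fun j => ?_) (fun j => ?_) i
      · simpa [Fin.append_left] using hv j
      · simpa [Fin.append_right] using hv' j
    · rw [Fin.sum_univ_add]
      simp [Fin.append_left, Fin.append_right]
  · rintro q hq x ⟨n, c, v, hc, hv, rfl⟩
    refine ⟨n, fun i => q * c i, v, fun i => mul_nonneg hq (hc i), hv, ?_⟩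
    rw [Finset.smul_sum]
    simp [smul_smul]

lemma subset_coneGen (S : Set Q) : S ⊆ ConeGen S := by
  intro x hx
  exact ⟨1, fun _ => 1, fun _ => x, fun _ => zero_le_one, fun _ => hx, by simp⟩

lemma coneGen_subset {S C : Set Q} (hS : S ⊆ C) (hC : IsCone C) : ConeGen S ⊆ C := by
  rintro x ⟨n, c, v, hc, hv, rfl⟩
  refine Finset.sum_induction _ (· ∈ C) (fun a b ha hb => hC.2.1 a ha b hb) hC.1 ?_
  intro i _
  exact hC.2.2 (c i) (hc i) (v i) (hS (hv i))

lemma face_terms {C₀ C : Set Q} (hC : IsCone C) (hf : IsFaceOf C₀ C) :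
    ∀ n (w : Fin n → Q), (∀ i, w i ∈ C) → (∑ i, w i) ∈ C₀ → ∀ i, w i ∈ C₀ := by
  intro n
  induction n with
  | zero => intro w _ _ i; exact i.elim0
  | succ m ih =>
    intro w hw hsum i
    have htail : (∑ j : Fin m, w j.succ) ∈ C := by
      refine Finset.sum_induction _ (· ∈ C) (fun a b ha hb => hC.2.1 a ha b hb) hC.1 ?_
      intro j _; exact hw j.succ
    rw [Fin.sum_univ_succ] at hsum
    have h := hf.2.2 _ (hw 0) _ htail hsum
    cases i using Fin.cases with
    | zero => exact h.1
    | succ j => exact ih (fun j => w j.succ) (fun j => hw j.succ) h.2 j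

/-- a face of a colored cone whose relative interior meets `V` is again a
colored cone (with colors `F₀ = F ∩ ρ⁻¹(C₀)`), and strict convexity is inherited. -/
theorem face_of_coloredCone_is_coloredCone
    [FiniteDimensional ℚ Q] {D : Type*} [Finite D]
    (V : Set Q) (ρ : D → Q) (C : Set Q) (F : Set D)
    (hCF : IsColoredCone V ρ C F)
    (C₀ : Set Q) (hface : IsFaceOf C₀ C) (hmeet : (RelInt C₀ ∩ V).Nonempty) :
    IsColoredCone V ρ C₀ (F ∩ ρ ⁻¹' C₀) ∧
    (IsStrictlyConvexColoredCone V ρ C F →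
      IsStrictlyConvexColoredCone V ρ C₀ (F ∩ ρ ⁻¹' C₀)) := by
  obtain ⟨⟨V₀, hfin, hsub, hCeq⟩, -⟩ := hCF
  have hC : IsCone C := hCeq ▸ isCone_coneGen _
  set S' : Set Q := ρ '' (F ∩ ρ ⁻¹' C₀) ∪ (V₀ ∩ C₀) with hS'
  have hS'sub : S' ⊆ C₀ := by
    rintro x (⟨d, ⟨-, hdC⟩, rfl⟩ | ⟨-, hxC⟩)
    · exact hdC
    · exact hxC
  have key : C₀ = ConeGen S' := by
    apply Set.Subset.antisymm
    · intro x hx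
      have hxC : x ∈ C := hface.2.1 hx
      rw [hCeq] at hxC
      obtain ⟨n, c, v, hc, hv, hxe⟩ := hxC
      subst hxe
      have hterm : ∀ i, c i • v i ∈ C₀ :=
        face_terms hC hface n (fun i => c i • v i)
          (fun i => hC.2.2 _ (hc i) _ (hCeq ▸ subset_coneGen _ (hv i))) hx
      have hvmem : ∀ i, c i ≠ 0 → v i ∈ S' := by
        intro i hi
        have hvC₀ : v i ∈ C₀ := by
          have := hface.1.2.2 (c i)⁻¹ (inv_nonneg.2 (hc i)) _ (hterm i)
          simpa [smul_smul, inv_mul_cancel₀ hi] using this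
        rcases hv i with ⟨d, hd, hde⟩ | hV
        · exact Or.inl ⟨d, ⟨hd, by rw [Set.mem_preimage, hde]; exact hvC₀⟩, hde⟩
        · exact Or.inr ⟨hV, hvC₀⟩
      by_cases hex : ∃ i, c i ≠ 0
      · obtain ⟨i₀, hi₀⟩ := hex
        refine ⟨n, c, fun i => if c i = 0 then v i₀ else v i, hc, ?_, ?_⟩
        · intro i
          by_cases h : c i = 0
          · simpa [h] using hvmem _ hi₀
          · simpa [h] using hvmem _ h
        · refine Finset.sum_congr rfl fun i _ => ?_
          by_cases h : c i = 0 <;> simp [h]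
      · push_neg at hex
        have hz : ∑ i, c i • v i = 0 := by
          refine Finset.sum_eq_zero fun i _ => ?_
          rw [hex i, zero_smul]
        rw [hz]
        exact (isCone_coneGen S').1
    · exact coneGen_subset hS'sub hface.1
  have hcc : IsColoredCone V ρ C₀ (F ∩ ρ ⁻¹' C₀) :=
    ⟨⟨V₀ ∩ C₀, hfin.subset Set.inter_subset_left,
      Set.inter_subset_left.trans hsub, key⟩, hmeet⟩
  refine ⟨hcc, ?_⟩
  rintro ⟨-, hsc, h0⟩
  refine ⟨hcc, ?_, ?_⟩
  · apply Set.Subset.antisymm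
    · rintro x ⟨hx1, hx2⟩
      have hx : x ∈ C ∩ {y | -y ∈ C} := ⟨hface.2.1 hx1, hface.2.1 hx2⟩
      rwa [hsc] at hx
    · rintro x hx
      rw [Set.mem_singleton_iff] at hx
      subst hx
      exact ⟨hface.1.1, by simpa using hface.1.1⟩
  · rintro ⟨d, ⟨hdF, -⟩, hde⟩
    exact h0 ⟨d, hdF, hde⟩
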